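/- Let G be a graph on n vertices and V an n×(n-1) matrix with V^T e = 0, V^T V = I. For each pair {i,j}, i<j, let M^{ij} = -½ V^T E^{ij} V, where E^{ij} is the symmetric matrix with 1 in positions (i,j), (j,i) and 0 elsewhere. Then the set { M^{ij} : {i,j} a missing edge of G } is linearly independent, and it is a basis of the null space of the linear map X ↦ H ∘ K_V(X), where H is the adjacency matrix of G, K_V(X) = diag(VXV^T)e^T + e diag(VXV^T)^T - 2VXV^T, and ∘ is the Hadamard product. -/

import Mathlib

open Matrix BigOperators

/-- `E^{ij}`: the symmetric matrix with 1's in entries `(i,j)` and `(j,i)`, 0 elsewhere. -/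
def Eij {n : ℕ} (i j : Fin n) : Matrix (Fin n) (Fin n) ℝ :=
  Matrix.single i j 1 + Matrix.single j i 1

/-!
The map `B ↦ -½ Vᵀ B V` is a left inverse of `K_V`, because `Vᵀ e = 0` kills the rank-one parts
`diag(Y) eᵀ` and `e diag(Y)ᵀ` of `K(Y)` and `Vᵀ V = I`. Completing `V` by the column `e / √n` to
an orthogonal matrix gives `V Vᵀ = I - J / n`, from which `K_V(M^{ij}) = E^{ij}`. So `K_V` maps
the span of the `M^{ij}` isomorphically onto the span of the `E^{ij}` over the missing edges,
which consists exactly of the symmetric hollow matrices vanishing on the edges of `G`. For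
symmetric `X`, `K_V(X)` is symmetric and hollow, so `H ∘ K_V(X) = 0` says precisely that `K_V(X)`
lies in this span.
-/

namespace Matrix

variable {ι κ : Type*} [Fintype κ]

/-- The map `K_V` of the paper, `X ↦ K(V X Vᵀ)` with `K(Y) = diag(Y) eᵀ + e diag(Y)ᵀ - 2 Y`. -/
def edmMap (V : Matrix ι κ ℝ) : Matrix κ κ ℝ →ₗ[ℝ] Matrix ι ι ℝ where
  toFun X := of fun i j => (V * X * Vᵀ) i i + (V * X * Vᵀ) j j - 2 * (V * X * Vᵀ) i j
  map_add' X Y := by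
    ext
    simp only [Matrix.mul_add, Matrix.add_mul, add_apply, of_apply]
    ring
  map_smul' c X := by
    ext
    simp only [Matrix.mul_smul, Matrix.smul_mul, smul_apply, of_apply, smul_eq_mul,
      RingHom.id_apply]
    ring

noncomputable def gramMap [Fintype ι] (V : Matrix ι κ ℝ) : Matrix ι ι ℝ →ₗ[ℝ] Matrix κ κ ℝ where
  toFun B := (-(1 / 2) : ℝ) • (Vᵀ * B * V)
  map_add' B C := by rw [Matrix.mul_add, Matrix.add_mul, smul_add]
  map_smul' c B := by rw [Matrix.mul_smul, Matrix.smul_mul, smul_comm]; rfl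

variable {V : Matrix ι κ ℝ}

lemma edmMap_isSymm {X : Matrix κ κ ℝ} (hX : X.IsSymm) : (edmMap V X).IsSymm := by
  have hY : (V * X * Vᵀ).IsSymm := by
    rw [IsSymm, transpose_mul, transpose_mul, transpose_transpose, hX.eq, Matrix.mul_assoc]
  ext i j
  simp only [edmMap, LinearMap.coe_mk, AddHom.coe_mk, transpose_apply, of_apply, hY.apply i j]
  ring

lemma diag_edmMap (X : Matrix κ κ ℝ) : (edmMap V X).diag = 0 := by
  ext i
  simp only [edmMap, LinearMap.coe_mk, AddHom.coe_mk, diag_apply, of_apply, Pi.zero_apply]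
  ring

lemma gramMap_edmMap [Fintype ι] [DecidableEq κ] (hVe : Vᵀ *ᵥ (fun _ => (1 : ℝ)) = 0)
    (hVV : Vᵀ * V = 1) (X : Matrix κ κ ℝ) : gramMap V (edmMap V X) = X := by
  set Y := V * X * Vᵀ
  have hK : edmMap V X = vecMulVec Y.diag (fun _ => 1) + vecMulVec (fun _ => 1) Y.diag
      - (2 : ℝ) • Y := by
    ext i j
    simp [edmMap, Y, vecMulVec_apply]
  have hY : Vᵀ * Y * V = X := by
    simp only [Y, ← Matrix.mul_assoc, hVV, Matrix.one_mul]
    rw [Matrix.mul_assoc, hVV, Matrix.mul_one]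
  have heV : (fun _ => (1 : ℝ)) ᵥ* V = 0 := by rw [← mulVec_transpose, hVe]
  simp only [gramMap, LinearMap.coe_mk, AddHom.coe_mk, hK, Matrix.mul_sub, Matrix.sub_mul,
    Matrix.mul_add, Matrix.add_mul, mul_vecMulVec, vecMulVec_mul, hVe, heV, zero_vecMulVec,
    vecMulVec_zero, Matrix.mul_smul, Matrix.smul_mul, hY, zero_add, Matrix.zero_mul, zero_sub,
    smul_neg, neg_smul, neg_neg, smul_smul]
  norm_num

lemma mul_transpose_eq_one_sub [Fintype ι] [DecidableEq ι] [DecidableEq κ]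
    (hcard : Fintype.card ι = Fintype.card κ + 1) (hVe : Vᵀ *ᵥ (fun _ => (1 : ℝ)) = 0)
    (hVV : Vᵀ * V = 1) :
    V * Vᵀ = 1 - (Fintype.card ι : ℝ)⁻¹ • of fun _ _ => 1 := by
  set c : ℝ := (Real.sqrt (Fintype.card ι))⁻¹
  let u : Matrix ι Unit ℝ := of fun _ _ => c
  have hc : c * c = (Fintype.card ι : ℝ)⁻¹ := by
    rw [← mul_inv, Real.mul_self_sqrt (Nat.cast_nonneg _)]
  have hVu : Vᵀ * u = 0 := by
    ext a x
    have := congrFun hVe a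
    simp only [mulVec, dotProduct, mul_one, transpose_apply, Pi.zero_apply] at this
    simp [u, mul_apply, ← Finset.sum_mul, this]
  have huu : uᵀ * u = 1 := by
    ext x y
    simp only [mul_apply, transpose_apply, of_apply, hc, hcard, Nat.cast_add, Nat.cast_one,
      Finset.sum_const, Finset.card_univ, nsmul_eq_mul, one_apply_eq, u]
    exact mul_inv_cancel₀ (by positivity)
  have horth : fromRows Vᵀ uᵀ * fromCols V u = 1 := by
    rw [fromRows_mul_fromCols, hVV, hVu, huu, ← transpose_transpose V, ← transpose_mul, hVu,
      transpose_zero, fromBlocks_one]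
  have e : ι ≃ κ ⊕ Unit := Fintype.equivOfCardEq (by simp [hcard])
  have horth' := (fromCols_mul_fromRows_eq_one_comm e V u Vᵀ uᵀ).2 horth
  rw [fromCols_mul_fromRows] at horth'
  rw [← horth']
  ext i j
  simp [u, mul_apply, hc]

end Matrix

section Eij

variable {n : ℕ}

lemma Eij_apply (i j k l : Fin n) :
    Eij i j k l = (if i = k ∧ j = l then 1 else 0) + (if j = k ∧ i = l then 1 else 0) := by
  simp [Eij, single_apply]

lemma isSymm_Eij (i j : Fin n) : (Eij i j).IsSymm :=
  IsSymm.ext fun k l => by rw [Eij_apply, Eij_apply, add_comm]; simp only [and_comm]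

lemma Eij_apply_self {i j : Fin n} (hij : i ≠ j) (k : Fin n) : Eij i j k k = 0 := by
  rw [Eij_apply]
  split_ifs <;> simp_all

lemma Eij_apply_of_lt {i j k l : Fin n} (hij : i < j) (hkl : k < l) :
    Eij i j k l = if (i, j) = (k, l) then 1 else 0 := by
  have : ¬(j = k ∧ i = l) := by rintro ⟨rfl, rfl⟩; exact lt_asymm hij hkl
  simp [Eij_apply, this]

lemma mul_Eij_mul_apply {α β : Type*} [Fintype α] [Fintype β]
    (A : Matrix α (Fin n) ℝ) (B : Matrix (Fin n) β ℝ) (i j : Fin n) (k : α) (l : β) :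
    (A * Eij i j * B) k l = A k i * B j l + A k j * B i l := by
  simp [mul_apply, Eij_apply, ite_and, add_mul, mul_add, Finset.sum_add_distrib]

lemma edmMap_gramMap_Eij {κ : Type*} [Fintype κ] [DecidableEq κ] {V : Matrix (Fin n) κ ℝ}
    (hcard : n = Fintype.card κ + 1) (hVe : Vᵀ *ᵥ (fun _ => (1 : ℝ)) = 0) (hVV : Vᵀ * V = 1)
    {i j : Fin n} (hij : i ≠ j) : edmMap V (gramMap V (Eij i j)) = Eij i j := by
  have hP : ∀ a b, (V * Vᵀ) a b = (if a = b then 1 else 0) - (n : ℝ)⁻¹ := by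
    intro a b
    rw [mul_transpose_eq_one_sub (by simpa using hcard) hVe hVV]
    simp [one_apply]
  have hconj :
      V * gramMap V (Eij i j) * Vᵀ = (-(1 / 2) : ℝ) • (V * Vᵀ * Eij i j * (V * Vᵀ)) := by
    simp [gramMap, Matrix.mul_assoc]
  ext k l
  simp only [edmMap, LinearMap.coe_mk, AddHom.coe_mk, of_apply, hconj, Matrix.smul_apply,
    mul_Eij_mul_apply, hP, Eij_apply, smul_eq_mul]
  -- `K` only sees differences `(V Vᵀ) k a - (V Vᵀ) l a`, in which the `1 / n` cancels.
  by_cases hki : k = i <;> by_cases hkj : k = j <;> by_cases hli : l = i <;>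
    by_cases hlj : l = j <;> simp_all [eq_comm] <;> ring

end Eij

section MissingEdges

variable {n : ℕ} (G : SimpleGraph (Fin n)) [DecidableRel G.Adj]

abbrev MissingEdge := {q : Fin n × Fin n // q.1 < q.2 ∧ ¬ G.Adj q.1 q.2}

variable {G}

lemma isSymm_sum_smul_Eij (c : MissingEdge G → ℝ) : (∑ q, c q • Eij q.1.1 q.1.2).IsSymm := by
  simp only [IsSymm, transpose_sum, transpose_smul, (isSymm_Eij _ _).eq]

lemma sum_smul_Eij_apply_of_lt (c : MissingEdge G → ℝ) {a b : Fin n} (hab : a < b) :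
    (∑ q, c q • Eij q.1.1 q.1.2) a b = if h : G.Adj a b then 0 else c ⟨(a, b), hab, h⟩ := by
  simp only [Matrix.sum_apply, Matrix.smul_apply, smul_eq_mul]
  split_ifs with h
  · refine Finset.sum_eq_zero fun q _ => ?_
    rw [Eij_apply_of_lt q.2.1 hab, if_neg fun hq : q.1 = (a, b) => q.2.2 (hq ▸ h), mul_zero]
  · rw [Fintype.sum_eq_single ⟨(a, b), hab, h⟩ fun q hq => ?_]
    · simp [Eij_apply_of_lt hab hab]
    · rw [Eij_apply_of_lt q.2.1 hab, if_neg fun h' => hq (Subtype.ext h'), mul_zero]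

lemma linearIndependent_Eij : LinearIndependent ℝ fun q : MissingEdge G => Eij q.1.1 q.1.2 :=
  Fintype.linearIndependent_iff.2 fun c hc q => by
    simpa [q.2.2] using (sum_smul_Eij_apply_of_lt c q.2.1).symm.trans (congr_fun₂ hc q.1.1 q.1.2)

lemma mem_span_Eij_iff {B : Matrix (Fin n) (Fin n) ℝ} (hB : B.IsSymm) (hdiag : B.diag = 0) :
    B ∈ Submodule.span ℝ (Set.range fun q : MissingEdge G => Eij q.1.1 q.1.2) ↔
      ∀ a b, G.Adj a b → B a b = 0 := by
  rw [Submodule.mem_span_range_iff_exists_fun]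
  constructor
  · rintro ⟨c, rfl⟩ a b hab
    rcases lt_trichotomy a b with hlt | rfl | hlt
    · rw [sum_smul_Eij_apply_of_lt c hlt, dif_pos hab]
    · exact absurd hab G.irrefl
    · rw [← (isSymm_sum_smul_Eij c).apply, sum_smul_Eij_apply_of_lt c hlt, dif_pos hab.symm]
  · intro hB0
    refine ⟨fun q => B q.1.1 q.1.2, ?_⟩
    have hupper : ∀ a b, a < b →
        (∑ q : MissingEdge G, B q.1.1 q.1.2 • Eij q.1.1 q.1.2) a b = B a b := by
      intro a b hab
      rw [sum_smul_Eij_apply_of_lt _ hab]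
      split_ifs with h
      exacts [(hB0 a b h).symm, rfl]
    ext a b
    rcases lt_trichotomy a b with hlt | rfl | hlt
    · exact hupper a b hlt
    · rw [show B a a = 0 from congr_fun hdiag a, Matrix.sum_apply]
      exact Finset.sum_eq_zero fun q _ => by
        rw [Matrix.smul_apply, Eij_apply_self (ne_of_lt q.2.1), smul_zero]
    · rw [← (isSymm_sum_smul_Eij _).apply, ← hB.apply, hupper b a hlt]

end MissingEdges

lemma SimpleGraph.adjMatrix_hadamard_eq_zero_iff {V α : Type*} [MulZeroOneClass α]
    (G : SimpleGraph V) [DecidableRel G.Adj] {B : Matrix V V α} :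
    G.adjMatrix α ⊙ B = 0 ↔ ∀ a b, G.Adj a b → B a b = 0 := by
  simp only [← Matrix.ext_iff, hadamard_apply, adjMatrix_apply, Matrix.zero_apply, ite_mul,
    one_mul, zero_mul, ite_eq_right_iff]

theorem stmt5 (n : ℕ) (G : SimpleGraph (Fin n)) [DecidableRel G.Adj]
    (V : Matrix (Fin n) (Fin (n - 1)) ℝ)
    (hVe : Vᵀ *ᵥ (fun _ => (1 : ℝ)) = 0) (hVV : Vᵀ * V = 1)
    (M : {q : Fin n × Fin n // q.1 < q.2 ∧ ¬ G.Adj q.1 q.2} →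
        Matrix (Fin (n - 1)) (Fin (n - 1)) ℝ)
    (hM : ∀ q, M q = (-(1/2) : ℝ) • (Vᵀ * Eij q.1.1 q.1.2 * V)) :
    LinearIndependent ℝ M ∧
    ∀ X : Matrix (Fin (n - 1)) (Fin (n - 1)) ℝ, X.IsSymm →
      (Matrix.hadamard (Matrix.of fun i j => if G.Adj i j then (1 : ℝ) else 0)
          (Matrix.of fun i j =>
            (V * X * Vᵀ) i i + (V * X * Vᵀ) j j - 2 * (V * X * Vᵀ) i j) = 0 ↔
        X ∈ Submodule.span ℝ (Set.range M)) := by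
  have hKM : ∀ q, edmMap V (M q) = Eij q.1.1 q.1.2 := fun q => by
    rw [hM q]
    exact edmMap_gramMap_Eij (by simp; have := q.1.1.pos; omega) hVe hVV (ne_of_lt q.2.1)
  have hrange : Set.range M = gramMap V '' Set.range fun q : MissingEdge G => Eij q.1.1 q.1.2 := by
    rw [← Set.range_comp]
    exact congrArg Set.range (funext hM)
  refine ⟨LinearIndependent.of_comp (edmMap V) ?_, fun X hX => ?_⟩
  · simpa only [Function.comp_def, hKM] using linearIndependent_Eij (G := G)
  change G.adjMatrix ℝ ⊙ edmMap V X = 0 ↔ _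
  rw [G.adjMatrix_hadamard_eq_zero_iff, ← mem_span_Eij_iff (edmMap_isSymm hX) (diag_edmMap X)]
  constructor
  · intro h
    rw [← gramMap_edmMap hVe hVV X, hrange]
    exact Submodule.apply_mem_span_image_of_mem_span _ h
  · refine fun h => (Submodule.span_le (p := (Submodule.span ℝ _).comap (edmMap V))).2
      (Set.range_subset_iff.2 fun q => ?_) h
    simp only [SetLike.mem_coe, Submodule.mem_comap, hKM]
    exact Submodule.subset_span ⟨q, rfl⟩
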